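/- Let m be a natural number. Then (i^{−m}/4) · ∑_{x ∈ {1,−1,i,−i}} x^{−m} · (e^{2πi·tr(x/8)} − e^{2πi·tr(x(3+2i)/8)}) = (1/2)·((1 − (−1)^m)·i^{1−m} + (1 + (−1)^m)). In particular this quantity equals 1 if m is even or m ≡ 1 mod 4, and equals −1 if m ≡ 3 mod 4. -/
import Mathlib

/-- The trace of a complex number: `tr z = z + conj z`. -/
noncomputable def ctr (z : ℂ) : ℂ := z + (starRingEnd ℂ) z

/-- The Gauss-sum expression for the sign `W(ψ_m)` of the functional equation of the
Hecke `L`-function attached to the character `ψ_m` of conductor `(4)`. -/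
noncomputable def Wpsi (m : ℕ) : ℂ :=
  (Complex.I ^ (-(m : ℤ)) / 4) *
    ∑ x ∈ ({1, -1, Complex.I, -Complex.I} : Finset ℂ),
      x ^ (-(m : ℤ)) *
        (Complex.exp (2 * Real.pi * Complex.I * ctr (x / 8)) -
          Complex.exp (2 * Real.pi * Complex.I * ctr (x * (3 + 2 * Complex.I) / 8)))

open Complex in
theorem sign_functional_equation_psi (m : ℕ) :
    Wpsi m = (1 / 2) * ((1 - (-1 : ℂ) ^ m) * Complex.I ^ (1 - (m : ℤ)) + (1 + (-1 : ℂ) ^ m)) ∧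
    (Even m ∨ m % 4 = 1 → Wpsi m = 1) ∧
    (m % 4 = 3 → Wpsi m = -1) := by
  have key : ∀ k : ℤ, Complex.exp (2 * Real.pi * I * (↑k/4)) = I ^ k := by
    intro k
    have h : (2 * ↑Real.pi * I * (↑k/4) : ℂ) = k * (↑(Real.pi/2) * I) := by push_cast; ring
    rw [h, Complex.exp_int_mul, Complex.exp_mul_I]
    push_cast
    simp [Real.cos_pi_div_two, Real.sin_pi_div_two]
  have c1 : ctr ((1:ℂ)/8) = ((1:ℤ):ℂ)/4 := by simp [ctr, Complex.ext_iff, map_ofNat]; norm_num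
  have c2 : ctr ((1:ℂ)*(3+2*I)/8) = ((3:ℤ):ℂ)/4 := by
    simp [ctr, Complex.ext_iff, map_ofNat]; norm_num
  have c3 : ctr ((-1:ℂ)/8) = ((-1:ℤ):ℂ)/4 := by simp [ctr, Complex.ext_iff, map_ofNat]; norm_num
  have c4 : ctr ((-1:ℂ)*(3+2*I)/8) = ((-3:ℤ):ℂ)/4 := by
    simp [ctr, Complex.ext_iff, map_ofNat]; norm_num
  have c5 : ctr (I/8) = ((0:ℤ):ℂ)/4 := by simp [ctr, Complex.ext_iff, map_ofNat]; norm_num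
  have c6 : ctr (I*(3+2*I)/8) = ((-2:ℤ):ℂ)/4 := by
    simp [ctr, Complex.ext_iff, map_ofNat]; norm_num
  have c7 : ctr (-I/8) = ((0:ℤ):ℂ)/4 := by simp [ctr, Complex.ext_iff, map_ofNat]; norm_num
  have c8 : ctr (-I*(3+2*I)/8) = ((2:ℤ):ℂ)/4 := by
    simp [ctr, Complex.ext_iff, map_ofNat]; norm_num
  -- power facts
  have i1 : I ^ (1:ℤ) = I := zpow_one I
  have i3 : I ^ (3:ℤ) = -I := by
    rw [show (3:ℤ) = ((3:ℕ):ℤ) by norm_num, zpow_natCast]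
    simp [pow_succ, Complex.I_mul_I]
  have im1 : I ^ (-1:ℤ) = -I := by simp [Complex.inv_I]
  have im3 : I ^ (-3:ℤ) = I := by
    rw [show (-3:ℤ) = -(3:ℤ) by norm_num, zpow_neg, i3, inv_neg, Complex.inv_I, neg_neg]
  have i0 : I ^ (0:ℤ) = 1 := zpow_zero I
  have i2 : I ^ (2:ℤ) = -1 := by
    rw [show (2:ℤ) = ((2:ℕ):ℤ) by norm_num, zpow_natCast, Complex.I_sq]
  have im2 : I ^ (-2:ℤ) = -1 := by
    rw [show (-2:ℤ) = -(2:ℤ) by norm_num, zpow_neg, i2]; norm_num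
  have hone : (1:ℂ) ^ (-(m:ℤ)) = 1 := one_zpow _
  have hneg1 : (-1:ℂ) ^ (-(m:ℤ)) = (-1)^m := by
    rw [zpow_neg, ← inv_zpow, inv_neg, inv_one, zpow_natCast]
  have hnegI : (-I) ^ (-(m:ℤ)) = (-1)^m * I ^ (-(m:ℤ)) := by
    rw [show (-I) = (-1) * I by ring, mul_zpow, hneg1]
  have htt : I ^ (-(m:ℤ)) * I ^ (-(m:ℤ)) = (-1:ℂ)^m := by
    rw [← zpow_add₀ Complex.I_ne_zero, show (-(m:ℤ) + -(m:ℤ)) = 2 * (-(m:ℤ)) by ring,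
      zpow_mul, i2]
    rw [zpow_neg, ← inv_zpow, inv_neg, inv_one, zpow_natCast]
  have hIt : I ^ (1 - (m:ℤ)) = I * I ^ (-(m:ℤ)) := by
    rw [sub_eq_add_neg, zpow_add₀ Complex.I_ne_zero, zpow_one]
  have hs2 : ((-1:ℂ)^m) * ((-1:ℂ)^m) = 1 := by
    rw [← pow_add, ← two_mul, pow_mul]; norm_num
  have hmain : Wpsi m =
      (1 / 2) * ((1 - (-1 : ℂ) ^ m) * Complex.I ^ (1 - (m : ℤ)) + (1 + (-1 : ℂ) ^ m)) := by
    unfold Wpsi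
    rw [show ({1, -1, Complex.I, -Complex.I} : Finset ℂ)
        = insert 1 (insert (-1) (insert I {-I})) from rfl]
    rw [Finset.sum_insert (by norm_num [Complex.ext_iff]),
        Finset.sum_insert (by norm_num [Complex.ext_iff]),
        Finset.sum_insert (by norm_num [Complex.ext_iff]),
        Finset.sum_singleton]
    rw [c1, c2, c3, c4, c5, c6, c7, c8]
    simp only [key]
    rw [i1, i3, im1, im3, i0, im2, i2, hone, hneg1, hnegI, hIt]
    linear_combination ((1 + (-1:ℂ)^m)/2) * htt + (1/2) * hs2
  refine ⟨hmain, ?_, ?_⟩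
  · rintro (hm | hm)
    · rw [hmain, Even.neg_one_pow hm]; ring
    · obtain ⟨k, hk⟩ : ∃ k, m = 4*k+1 := ⟨m/4, by omega⟩
      have hodd : Odd m := ⟨2*k, by omega⟩
      have h14 : I ^ (1 - (m:ℤ)) = 1 := by
        rw [show (1 - (m:ℤ)) = 4 * (-(k:ℤ)) by rw [hk]; push_cast; ring, zpow_mul,
          show (4:ℤ) = ((4:ℕ):ℤ) by norm_num, zpow_natCast, Complex.I_pow_four, one_zpow]
      rw [hmain, Odd.neg_one_pow hodd, h14]; norm_num
  · intro hm
    obtain ⟨k, hk⟩ : ∃ k, m = 4*k+3 := ⟨m/4, by omega⟩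
    have hodd : Odd m := ⟨2*k+1, by omega⟩
    have h14 : I ^ (1 - (m:ℤ)) = -1 := by
      rw [show (1 - (m:ℤ)) = -2 + 4 * (-(k:ℤ)) by rw [hk]; push_cast; ring,
        zpow_add₀ Complex.I_ne_zero, zpow_mul,
        show (4:ℤ) = ((4:ℕ):ℤ) by norm_num, zpow_natCast, Complex.I_pow_four, one_zpow, im2]
      ring
    rw [hmain, Odd.neg_one_pow hodd, h14]; norm_num
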